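/- Let ψ : ℝⁿ → ℝ be a Schwartz function with supp ψ ⊂ B(0,4). Then for every integer s ≥ ⌊n/2⌋ + 1, the function (-Δ)^s 𝓕^{-1}ψ = 𝓕^{-1}[|ξ|^{2s}ψ(ξ)] satisfies ‖(-Δ)^s 𝓕^{-1}ψ‖_{L¹(ℝⁿ)} ≤ C_{ψ,n}·(1 + s^{n+1})·4^{2s}, where C_{ψ,n} depends only on n and on finitely many derivatives of ψ, and not on s. -/

import Mathlib

open MeasureTheory Metric
open scoped FourierTransform SchwartzMap

private lemma aux_iteratedDeriv_pow (s : ℕ) : ∀ (i : ℕ),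
    iteratedDeriv i (fun x : ℝ => x ^ s) = fun x => (s.descFactorial i : ℝ) * x ^ (s - i) := by
  intro i
  induction i with
  | zero => simp
  | succ i ih =>
    rw [iteratedDeriv_succ, ih]
    funext x
    rw [deriv_const_mul _ (differentiableAt_pow _), deriv_pow_field, Nat.descFactorial_succ,
      Nat.sub_sub]
    push_cast
    ring

private lemma aux_id_bound {E : Type*} [NormedAddCommGroup E] [NormedSpace ℝ E]
    (x : E) (hx : ‖x‖ ≤ 4) : ∀ i, ‖iteratedFDeriv ℝ i (fun y : E => y) x‖ ≤ 4 := by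
  intro i
  match i with
  | 0 => rw [norm_iteratedFDeriv_zero]; exact hx
  | (i+1) =>
    rw [← norm_iteratedFDeriv_fderiv]
    have hfd : (fderiv ℝ (fun y : E => y)) = fun _ : E => ContinuousLinearMap.id ℝ E := by
      funext y; exact fderiv_id'
    rw [hfd]
    match i with
    | 0 =>
      rw [norm_iteratedFDeriv_zero]
      exact le_trans (ContinuousLinearMap.norm_id_le) (by norm_num)
    | (i+1) =>
      rw [iteratedFDeriv_const_of_ne (by omega)]
      simp

private lemma aux_normsq_bound {E : Type*} [NormedAddCommGroup E] [InnerProductSpace ℝ E]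
    (x : E) (hx : ‖x‖ ≤ 4) {i : ℕ} (hi : 1 ≤ i) :
    ‖iteratedFDeriv ℝ i (fun y : E => ‖y‖ ^ 2) x‖ ≤ 32 ^ i := by
  have hfun : (fun y : E => ‖y‖ ^ 2) = fun y => (innerSL ℝ y) y := by
    funext y
    simp [real_inner_self_eq_norm_sq]
  rw [hfun]
  refine ((innerSL ℝ).norm_iteratedFDeriv_le_of_bilinear contDiff_id contDiff_id x
    (le_top : (i : WithTop ℕ∞) ≤ ⊤)).trans ?_
  have hsum : ∑ a ∈ Finset.range (i + 1),
      (i.choose a : ℝ) * ‖iteratedFDeriv ℝ a (fun y : E => y) x‖ *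
        ‖iteratedFDeriv ℝ (i - a) (fun y : E => y) x‖ ≤ 16 * 2 ^ i := by
    calc ∑ a ∈ Finset.range (i + 1),
        (i.choose a : ℝ) * ‖iteratedFDeriv ℝ a (fun y : E => y) x‖ *
          ‖iteratedFDeriv ℝ (i - a) (fun y : E => y) x‖
        ≤ ∑ a ∈ Finset.range (i + 1), (i.choose a : ℝ) * 4 * 4 := by
          refine Finset.sum_le_sum fun a _ => ?_
          have h1 := aux_id_bound x hx a
          have h2 := aux_id_bound x hx (i - a)
          have hc : (0:ℝ) ≤ (i.choose a : ℝ) := by positivity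
          calc (i.choose a : ℝ) * ‖iteratedFDeriv ℝ a (fun y : E => y) x‖ *
              ‖iteratedFDeriv ℝ (i - a) (fun y : E => y) x‖
              ≤ (i.choose a : ℝ) * 4 * ‖iteratedFDeriv ℝ (i - a) (fun y : E => y) x‖ := by
                gcongr
            _ ≤ (i.choose a : ℝ) * 4 * 4 := by gcongr
      _ = 16 * 2 ^ i := by
          rw [← Finset.sum_mul, ← Finset.sum_mul]
          have : ∑ a ∈ Finset.range (i + 1), (i.choose a : ℝ) = 2 ^ i := by
            exact_mod_cast congrArg (Nat.cast : ℕ → ℝ) (Nat.sum_range_choose i)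
          rw [this]; ring
  have hnorm : ‖innerSL (E := E) ℝ‖ ≤ 1 := norm_innerSL_le ℝ
  calc ‖innerSL (E := E) ℝ‖ * ∑ a ∈ Finset.range (i + 1),
      (i.choose a : ℝ) * ‖iteratedFDeriv ℝ a (fun y : E => y) x‖ *
        ‖iteratedFDeriv ℝ (i - a) (fun y : E => y) x‖
      ≤ 1 * (16 * 2 ^ i) := by
        refine mul_le_mul hnorm hsum ?_ one_pos.le
        positivity
    _ ≤ 32 ^ i := by
        rw [one_mul, show (32:ℝ) = 16 * 2 by norm_num, mul_pow]
        have h16 : (16:ℝ) ≤ 16 ^ i := le_self_pow₀ (by norm_num) (by omega)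
        exact mul_le_mul_of_nonneg_right h16 (by positivity)

set_option maxHeartbeats 1000000 in
/-- `L¹` growth bound for iterated Laplacians of `𝓕⁻¹ψ`: if `ψ` is Schwartz with support
in `B(0,4)`, there is a constant `C` depending only on `ψ` and `n` such that for every
integer `s ≥ ⌊n/2⌋ + 1`,
`‖(-Δ)^s 𝓕⁻¹ψ‖_{L¹} = ‖𝓕⁻¹[|ξ|^{2s} ψ]‖_{L¹} ≤ C (1 + s^{n+1}) 4^{2s}`. -/
theorem laplacian_inv_fourier_L1_bound {n : ℕ} (ψ : 𝓢(EuclideanSpace ℝ (Fin n), ℝ))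
    (hsupp : Function.support ψ ⊆ ball 0 4) :
    ∃ C : ℝ, 0 < C ∧
      ∀ s : ℕ, n / 2 + 1 ≤ s →
        ∫ x : EuclideanSpace ℝ (Fin n),
            ‖𝓕⁻ (fun ξ => (‖ξ‖ ^ (2 * s) * ψ ξ : ℂ)) x‖
          ≤ C * (1 + (s : ℝ) ^ (n + 1)) * 4 ^ (2 * s) := by
  classical
  set E := EuclideanSpace ℝ (Fin n)
  -- constants independent of s
  set Cψ : ℝ := ∑ m ∈ Finset.range (n + 2), SchwartzMap.seminorm ℝ 0 m ψ with hCψdef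
  have hCψ0 : 0 ≤ Cψ := Finset.sum_nonneg fun m _ => apply_nonneg _ _
  have hψle : ∀ m, m ≤ n + 1 → ∀ x : E, ‖iteratedFDeriv ℝ m (⇑ψ) x‖ ≤ Cψ + 1 := by
    intro m hm x
    refine le_trans (SchwartzMap.norm_iteratedFDeriv_le_seminorm ℝ ψ m x) (le_trans ?_ (by linarith))
    exact Finset.single_le_sum (f := fun m => (SchwartzMap.seminorm ℝ 0 m) ψ)
      (fun i _ => apply_nonneg _ _) (Finset.mem_range.2 (by omega))
  set A : ℝ := 2 ^ (n + 1) * (Nat.factorial (n + 1) : ℝ) * 32 ^ (n + 1) * (Cψ + 1) with hAdef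
  have hA0 : 0 ≤ A := by positivity
  set V : ℝ := (volume (closedBall (0 : E) 4)).toReal with hVdef
  have hV0 : 0 ≤ V := ENNReal.toReal_nonneg
  set J : ℝ := ∫ w : E, ((1 + ‖w‖) ^ (n + 1))⁻¹ with hJdef
  have hJ0 : 0 ≤ J := integral_nonneg fun w => by positivity
  have hJint : Integrable (fun w : E => ((1 + ‖w‖) ^ (n + 1))⁻¹) := by
    have hlt : ((Module.finrank ℝ E : ℝ)) < ((n : ℝ) + 1) := by
      rw [show Module.finrank ℝ E = n from finrank_euclideanSpace_fin]
      linarith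
    refine (integrable_one_add_norm (E := E) (μ := volume) hlt).congr (ae_of_all _ fun x => ?_)
    show (1 + ‖x‖) ^ (-((n:ℝ) + 1)) = ((1 + ‖x‖) ^ (n + 1))⁻¹
    rw [Real.rpow_neg (by positivity)]
    congr 1
    rw [show ((n : ℝ) + 1) = ((n + 1 : ℕ) : ℝ) by push_cast; ring, Real.rpow_natCast]
  set D : ℝ := 2 ^ (n + 1) * (2 ^ (n + 2) * (n + 2) * (V * A)) * J with hDdef
  have hD0 : 0 ≤ D := by positivity
  -- the elementary inequality
  have key : ∀ t : ℝ, 0 ≤ t → (1 + t) ^ (n + 1) ≤ 2 ^ (n + 1) * (1 + t ^ (n + 1)) := by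
    intro t ht
    rcases le_total t 1 with h | h
    · calc (1 + t) ^ (n + 1) ≤ 2 ^ (n + 1) := by
            apply pow_le_pow_left₀ (by linarith) (by linarith)
        _ ≤ 2 ^ (n + 1) * (1 + t ^ (n + 1)) := by
            nlinarith [pow_nonneg ht (n + 1), pow_pos (show (0:ℝ) < 2 by norm_num) (n + 1)]
    · calc (1 + t) ^ (n + 1) ≤ (2 * t) ^ (n + 1) := by
            apply pow_le_pow_left₀ (by linarith) (by linarith)
        _ = 2 ^ (n + 1) * t ^ (n + 1) := mul_pow _ _ _
        _ ≤ 2 ^ (n + 1) * (1 + t ^ (n + 1)) := by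
            have : (0:ℝ) < 2 ^ (n + 1) := by positivity
            nlinarith
  refine ⟨(D + 1) * 2 ^ (n + 1), by positivity, ?_⟩
  intro s hs
  have hs1 : 1 ≤ s := by omega
  have hs1' : (1 : ℝ) ≤ (s : ℝ) := by exact_mod_cast hs1
  -- the function and its basic properties
  set g : E → ℂ := fun ξ => (‖ξ‖ ^ (2 * s) * ψ ξ : ℂ) with hgdef
  set h : E → ℝ := fun ξ => (‖ξ‖ ^ 2) ^ s * ψ ξ with hhdef
  have hgh : g = ⇑Complex.ofRealLI ∘ h := by
    funext ξ
    show (‖ξ‖ : ℂ) ^ (2 * s) * (ψ ξ : ℂ) = (((‖ξ‖ ^ 2) ^ s * ψ ξ : ℝ) : ℂ)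
    push_cast
    rw [← pow_mul]
  have h_smooth : ContDiff ℝ (⊤ : ℕ∞) h :=
    ((contDiff_norm_sq ℝ).pow _).mul (ψ.smooth ⊤)
  have g_smooth : ContDiff ℝ (⊤ : ℕ∞) g := by
    rw [hgh]
    exact (Complex.ofRealCLM.contDiff).comp h_smooth
  have htsup : tsupport g ⊆ closedBall (0 : E) 4 := by
    refine subset_trans (closure_mono ?_) closure_ball_subset_closedBall
    intro ξ hξ
    have hψξ : ψ ξ ≠ 0 := by
      intro h0
      apply hξ
      simp [hgdef, h0]
    exact hsupp hψξ
  have hcs : HasCompactSupport g :=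
    HasCompactSupport.of_support_subset_isCompact (isCompact_closedBall _ _)
      (subset_trans subset_closure htsup)
  have gzero : ∀ v, v ∉ closedBall (0 : E) 4 → ∀ j, iteratedFDeriv ℝ j g v = 0 := by
    intro v hv j
    by_contra hne
    exact hv (htsup (tsupport_iteratedFDeriv_subset j (subset_closure (Function.mem_support.2 hne))))
  -- derivative bounds
  have hC_pow : ∀ i ≤ n + 1, ∀ t : ℝ, 0 ≤ t → t ≤ 16 →
      ‖iteratedFDeriv ℝ i (fun y : ℝ => y ^ s) t‖ ≤ ((s:ℝ) + 1) ^ (n+1) * 16 ^ s := by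
    intro i hi t ht ht16
    rw [norm_iteratedFDeriv_eq_norm_iteratedDeriv, aux_iteratedDeriv_pow]
    rw [Real.norm_eq_abs, abs_mul, Nat.abs_cast, abs_of_nonneg (pow_nonneg ht _)]
    have h1 : (s.descFactorial i : ℝ) ≤ (s:ℝ) ^ i := by
      exact_mod_cast Nat.descFactorial_le_pow s i
    have h2 : (s:ℝ) ^ i ≤ ((s:ℝ) + 1) ^ (n+1) :=
      le_trans (pow_le_pow_left₀ (by positivity) (by linarith) i)
        (pow_le_pow_right₀ (by linarith) hi)
    have h3 : t ^ (s - i) ≤ 16 ^ s :=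
      le_trans (pow_le_pow_left₀ ht ht16 _) (pow_le_pow_right₀ (by norm_num) (Nat.sub_le s i))
    exact mul_le_mul (h1.trans h2) h3 (by positivity) (by positivity)
  have hφ : ∀ j ≤ n + 1, ∀ x : E, ‖x‖ ≤ 4 →
      ‖iteratedFDeriv ℝ j (fun ξ : E => (‖ξ‖ ^ 2) ^ s) x‖ ≤
        (Nat.factorial (n+1) : ℝ) * (((s:ℝ) + 1) ^ (n+1) * 16 ^ s) * 32 ^ (n+1) := by
    intro j hj x hx
    have hcomp : (fun ξ : E => (‖ξ‖ ^ 2) ^ s) = (fun y : ℝ => y ^ s) ∘ (fun ξ : E => ‖ξ‖ ^ 2) :=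
      rfl
    rw [hcomp]
    have hb := norm_iteratedFDeriv_comp_le (𝕜 := ℝ) (g := fun y : ℝ => y ^ s)
      (f := fun ξ : E => ‖ξ‖ ^ 2) (n := j) (N := ((⊤:ℕ∞) : WithTop ℕ∞))
      (contDiff_id.pow s) (contDiff_norm_sq ℝ) (by exact_mod_cast le_top) x
      (C := ((s:ℝ) + 1) ^ (n+1) * 16 ^ s) (D := 32)
      (fun i hi => hC_pow i (hi.trans hj) (‖x‖ ^ 2) (by positivity) (by nlinarith [norm_nonneg x]))
      (fun i hi1 hij => aux_normsq_bound x hx hi1)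
    refine hb.trans ?_
    have hf1 : (j.factorial : ℝ) ≤ ((n+1).factorial : ℝ) := by
      exact_mod_cast Nat.factorial_le hj
    have hf2 : (32:ℝ) ^ j ≤ 32 ^ (n+1) := pow_le_pow_right₀ (by norm_num) hj
    have hc0 : (0:ℝ) ≤ ((s:ℝ) + 1) ^ (n+1) * 16 ^ s := by positivity
    gcongr
  have hh : ∀ j ≤ n + 1, ∀ x : E, ‖x‖ ≤ 4 →
      ‖iteratedFDeriv ℝ j h x‖ ≤ A * (((s:ℝ) + 1) ^ (n+1) * 16 ^ s) := by
    intro j hj x hx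
    have hb := norm_iteratedFDeriv_mul_le (𝕜 := ℝ) (N := ((⊤:ℕ∞) : WithTop ℕ∞))
      ((contDiff_norm_sq ℝ).pow s) (ψ.smooth ⊤) x (n := j) (by exact_mod_cast le_top)
    refine hb.trans ?_
    have step : ∀ i ∈ Finset.range (j+1),
        (j.choose i : ℝ) * ‖iteratedFDeriv ℝ i (fun ξ : E => (‖ξ‖ ^ 2) ^ s) x‖ *
          ‖iteratedFDeriv ℝ (j - i) (⇑ψ) x‖ ≤
        (j.choose i : ℝ) * ((Nat.factorial (n+1) : ℝ) * (((s:ℝ) + 1) ^ (n+1) * 16 ^ s) *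
          32 ^ (n+1) * (Cψ + 1)) := by
      intro i hi
      rw [Finset.mem_range] at hi
      have h1 := hφ i (by omega) x hx
      have h2 := hψle (j - i) (by omega) x
      calc (j.choose i : ℝ) * ‖iteratedFDeriv ℝ i (fun ξ : E => (‖ξ‖ ^ 2) ^ s) x‖ *
            ‖iteratedFDeriv ℝ (j - i) (⇑ψ) x‖
          ≤ (j.choose i : ℝ) * ((Nat.factorial (n+1) : ℝ) * (((s:ℝ) + 1) ^ (n+1) * 16 ^ s) *
              32 ^ (n+1)) * (Cψ + 1) := by
            have hc : (0:ℝ) ≤ (j.choose i : ℝ) := by positivity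
            have := mul_le_mul (mul_le_mul_of_nonneg_left h1 hc) h2 (norm_nonneg _)
              (by positivity)
            exact this
        _ = (j.choose i : ℝ) * ((Nat.factorial (n+1) : ℝ) * (((s:ℝ) + 1) ^ (n+1) * 16 ^ s) *
              32 ^ (n+1) * (Cψ + 1)) := by ring
    refine (Finset.sum_le_sum step).trans ?_
    rw [← Finset.sum_mul]
    have hch : ∑ i ∈ Finset.range (j+1), (j.choose i : ℝ) = 2 ^ j := by
      exact_mod_cast congrArg (Nat.cast : ℕ → ℝ) (Nat.sum_range_choose j)
    rw [hch, hAdef]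
    have h2j : (2:ℝ) ^ j ≤ 2 ^ (n+1) := pow_le_pow_right₀ (by norm_num) hj
    have hrest : (0:ℝ) ≤ (Nat.factorial (n+1) : ℝ) * (((s:ℝ) + 1) ^ (n+1) * 16 ^ s) *
        32 ^ (n+1) * (Cψ + 1) := by positivity
    calc (2:ℝ) ^ j * ((Nat.factorial (n+1) : ℝ) * (((s:ℝ) + 1) ^ (n+1) * 16 ^ s) *
          32 ^ (n+1) * (Cψ + 1))
        ≤ (2:ℝ) ^ (n+1) * ((Nat.factorial (n+1) : ℝ) * (((s:ℝ) + 1) ^ (n+1) * 16 ^ s) *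
          32 ^ (n+1) * (Cψ + 1)) := mul_le_mul_of_nonneg_right h2j hrest
      _ = 2 ^ (n+1) * (Nat.factorial (n+1) : ℝ) * 32 ^ (n+1) * (Cψ + 1) *
          (((s:ℝ) + 1) ^ (n+1) * 16 ^ s) := by ring
  have hgb : ∀ j ≤ n + 1, ∀ x : E, ‖x‖ ≤ 4 →
      ‖iteratedFDeriv ℝ j g x‖ ≤ A * (((s:ℝ) + 1) ^ (n+1) * 16 ^ s) := by
    intro j hj x hx
    rw [hgh, Complex.ofRealLI.norm_iteratedFDeriv_comp_left
      (h_smooth.contDiffAt (x := x)) (by exact_mod_cast le_top)]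
    exact hh j hj x hx
  -- integrability
  have hInt : ∀ (k j : ℕ), Integrable (fun v : E => ‖v‖ ^ k * ‖iteratedFDeriv ℝ j g v‖) := by
    intro k j
    apply Continuous.integrable_of_hasCompactSupport
    · exact (continuous_norm.pow k).mul
        ((g_smooth.continuous_iteratedFDeriv (by exact_mod_cast le_top)).norm)
    · exact ((hcs.iteratedFDeriv j).norm).mul_left
  set Bs : ℝ := A * (((s:ℝ) + 1) ^ (n+1) * 16 ^ s) with hBs
  have hBs0 : 0 ≤ Bs := by positivity
  have hI : ∀ j ≤ n + 1, (∫ v : E, ‖iteratedFDeriv ℝ j g v‖) ≤ V * Bs := by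
    intro j hj
    have hpt : ∀ v : E, ‖iteratedFDeriv ℝ j g v‖ ≤
        Set.indicator (closedBall (0:E) 4) (fun _ => Bs) v := by
      intro v
      by_cases hv : v ∈ closedBall (0:E) 4
      · rw [Set.indicator_of_mem hv]
        exact hgb j hj v (mem_closedBall_zero_iff.1 hv)
      · rw [Set.indicator_of_notMem hv, gzero v hv j]
        simp
    calc (∫ v : E, ‖iteratedFDeriv ℝ j g v‖)
        ≤ ∫ v : E, Set.indicator (closedBall (0:E) 4) (fun _ => Bs) v :=
          integral_mono_of_nonneg (ae_of_all _ fun v => norm_nonneg _)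
            (((integrableOn_const measure_closedBall_lt_top.ne).integrable_indicator measurableSet_closedBall)) (ae_of_all _ hpt)
      _ = V * Bs := by
          rw [integral_indicator_const _ measurableSet_closedBall, smul_eq_mul, measureReal_def]
  have hM1 : ∀ w : E, ‖𝓕 g w‖ ≤ V * Bs := by
    intro w
    have hb := Real.pow_mul_norm_iteratedFDeriv_fourier_le (K := ⊤) (N := ⊤)
      g_smooth (fun k m _ _ => hInt k m) (k := 0) (n := 0) le_top le_top w
    simp only [norm_iteratedFDeriv_zero, pow_zero, one_mul, zero_add, Finset.range_one,
      Finset.product_singleton, Finset.sum_map, Function.Embedding.coeFn_mk,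
      Finset.sum_singleton] at hb
    have hI0 : (∫ v : E, ‖g v‖) ≤ V * Bs := by
      have := hI 0 (by omega)
      simpa [norm_iteratedFDeriv_zero] using this
    exact hb.trans hI0
  have hM2 : ∀ w : E, ‖w‖ ^ (n+1) * ‖𝓕 g w‖ ≤ 2 ^ (n+1) * (((n:ℝ) + 2) * (V * Bs)) := by
    intro w
    have hb := Real.pow_mul_norm_iteratedFDeriv_fourier_le (K := ⊤) (N := ⊤)
      g_smooth (fun k m _ _ => hInt k m) (k := 0) (n := n+1) le_top le_top w
    simp only [norm_iteratedFDeriv_zero, pow_zero, one_mul] at hb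
    refine hb.trans ?_
    have hsum : ∑ p ∈ Finset.range (0+1) ×ˢ Finset.range (n+1+1),
        ∫ v : E, ‖v‖ ^ p.1 * ‖iteratedFDeriv ℝ p.2 g v‖ ≤ ((n:ℝ) + 2) * (V * Bs) := by
      have hcard : (Finset.range (0+1) ×ˢ Finset.range (n+1+1)).card = n+2 := by
        simp
      have hb2 := Finset.sum_le_card_nsmul (Finset.range (0+1) ×ˢ Finset.range (n+1+1))
        (fun p => ∫ v : E, ‖v‖ ^ p.1 * ‖iteratedFDeriv ℝ p.2 g v‖) (V * Bs) ?_
      · rw [hcard] at hb2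
        refine hb2.trans ?_
        rw [nsmul_eq_mul]
        push_cast
        exact le_refl _
      · intro p hp
        rw [Finset.mem_product, Finset.mem_range, Finset.mem_range] at hp
        have hp1 : p.1 = 0 := by omega
        show (∫ v : E, ‖v‖ ^ p.1 * ‖iteratedFDeriv ℝ p.2 g v‖) ≤ V * Bs
        rw [hp1]
        simp only [pow_zero, one_mul]
        exact hI p.2 (by omega)
    calc (2 * (0:ℕ) + 2 : ℝ) ^ (n+1) * ∑ p ∈ Finset.range (0+1) ×ˢ Finset.range (n+1+1),
          ∫ v : E, ‖v‖ ^ p.1 * ‖iteratedFDeriv ℝ p.2 g v‖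
        ≤ (2 * (0:ℕ) + 2 : ℝ) ^ (n+1) * (((n:ℝ) + 2) * (V * Bs)) := by
          refine mul_le_mul_of_nonneg_left hsum (by positivity)
      _ = 2 ^ (n+1) * (((n:ℝ) + 2) * (V * Bs)) := by norm_num
  have hpt2 : ∀ w : E, ‖𝓕⁻ g w‖ * (1 + ‖w‖) ^ (n+1) ≤
      2 ^ (n+1) * (2 ^ (n+2) * ((n:ℝ) + 2) * (V * Bs)) := by
    intro w
    rw [Real.fourierInv_eq_fourier_neg]
    have h1 := hM1 (-w)
    have h2 := hM2 (-w)
    rw [norm_neg] at h2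
    have hkey := key ‖w‖ (norm_nonneg w)
    have hVBs : (0:ℝ) ≤ V * Bs := by positivity
    calc ‖𝓕 g (-w)‖ * (1 + ‖w‖) ^ (n+1)
        ≤ ‖𝓕 g (-w)‖ * (2 ^ (n+1) * (1 + ‖w‖ ^ (n+1))) :=
          mul_le_mul_of_nonneg_left hkey (norm_nonneg _)
      _ = 2 ^ (n+1) * (‖𝓕 g (-w)‖ + ‖w‖ ^ (n+1) * ‖𝓕 g (-w)‖) := by ring
      _ ≤ 2 ^ (n+1) * ((V * Bs) + 2 ^ (n+1) * (((n:ℝ) + 2) * (V * Bs))) :=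
          mul_le_mul_of_nonneg_left (add_le_add h1 h2) (by positivity)
      _ ≤ 2 ^ (n+1) * (2 ^ (n+2) * ((n:ℝ) + 2) * (V * Bs)) := by
          refine mul_le_mul_of_nonneg_left ?_ (by positivity)
          have hpow : (2:ℝ) ^ (n+2) = 2 * 2 ^ (n+1) := by
            rw [pow_succ]; ring
          rw [hpow]
          have h1' : (1:ℝ) ≤ 2 ^ (n+1) := one_le_pow₀ (by norm_num)
          have hn2 : (1:ℝ) ≤ (n:ℝ) + 2 := by
            have : (0:ℝ) ≤ (n:ℝ) := Nat.cast_nonneg n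
            linarith
          have hcb : (1:ℝ) ≤ 2 ^ (n+1) * ((n:ℝ) + 2) := by nlinarith
          have hX : (V * Bs) ≤ 2 ^ (n+1) * (((n:ℝ) + 2) * (V * Bs)) := by
            calc (V * Bs) = 1 * (V * Bs) := (one_mul _).symm
              _ ≤ (2 ^ (n+1) * ((n:ℝ) + 2)) * (V * Bs) :=
                  mul_le_mul_of_nonneg_right hcb hVBs
              _ = 2 ^ (n+1) * (((n:ℝ) + 2) * (V * Bs)) := by ring
          linarith
  have hptw : ∀ w : E, ‖𝓕⁻ g w‖ ≤
      (2 ^ (n+1) * (2 ^ (n+2) * ((n:ℝ) + 2) * (V * Bs))) * ((1 + ‖w‖) ^ (n+1))⁻¹ := by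
    intro w
    have h0 : (0:ℝ) < (1 + ‖w‖) ^ (n+1) := by positivity
    have := (le_div_iff₀ h0).2 (hpt2 w)
    rwa [div_eq_mul_inv] at this
  have hfinal : (∫ x : E, ‖𝓕⁻ g x‖) ≤
      (2 ^ (n+1) * (2 ^ (n+2) * ((n:ℝ) + 2) * (V * Bs))) * J := by
    calc (∫ x : E, ‖𝓕⁻ g x‖)
        ≤ ∫ w : E, (2 ^ (n+1) * (2 ^ (n+2) * ((n:ℝ) + 2) * (V * Bs))) * ((1 + ‖w‖) ^ (n+1))⁻¹ :=
          integral_mono_of_nonneg (ae_of_all _ fun w => norm_nonneg _) (hJint.const_mul _)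
            (ae_of_all _ hptw)
      _ = _ := by rw [integral_const_mul]
  refine hfinal.trans ?_
  rw [hBs]
  have h16 : (16:ℝ) ^ s = 4 ^ (2 * s) := by
    rw [pow_mul]; norm_num
  have hsp := key (s:ℝ) (by positivity)
  have hLHS : (2 ^ (n+1) * (2 ^ (n+2) * ((n:ℝ) + 2) *
      (V * (A * (((s:ℝ) + 1) ^ (n+1) * 16 ^ s))))) * J = D * (((s:ℝ) + 1) ^ (n+1) * 16 ^ s) := by
    rw [hDdef]; ring
  rw [hLHS]
  have hsp' : ((s:ℝ) + 1) ^ (n+1) ≤ 2 ^ (n+1) * (1 + (s:ℝ) ^ (n+1)) := by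
    calc ((s:ℝ) + 1) ^ (n+1) = (1 + (s:ℝ)) ^ (n+1) := by ring_nf
      _ ≤ _ := hsp
  calc D * (((s:ℝ) + 1) ^ (n+1) * 16 ^ s)
      ≤ D * ((2 ^ (n+1) * (1 + (s:ℝ) ^ (n+1))) * 16 ^ s) := by
        have h160 : (0:ℝ) ≤ 16 ^ s := by positivity
        have := mul_le_mul_of_nonneg_right hsp' h160
        exact mul_le_mul_of_nonneg_left this hD0
    _ = (D * 2 ^ (n+1)) * (1 + (s:ℝ) ^ (n+1)) * 4 ^ (2 * s) := by rw [← h16]; ring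
    _ ≤ ((D + 1) * 2 ^ (n+1)) * (1 + (s:ℝ) ^ (n+1)) * 4 ^ (2 * s) := by
        have hx1 : (0:ℝ) ≤ 1 + (s:ℝ) ^ (n+1) := by positivity
        have hx2 : (0:ℝ) ≤ (4:ℝ) ^ (2 * s) := by positivity
        have : D * 2 ^ (n+1) ≤ (D + 1) * 2 ^ (n+1) := by
          have : (0:ℝ) ≤ (2:ℝ) ^ (n+1) := by positivity
          nlinarith
        exact mul_le_mul_of_nonneg_right (mul_le_mul_of_nonneg_right this hx1) hx2
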